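/- arXiv:1603.06966 — 4 statements merged into one kernel-verified Lean document; each statement's English description precedes it below -/
import Mathlib

section
/- Under the Lipschitz-exact approximation hypotheses, for Lebesgue-almost every x ∈ U the maps S and ι = (Q,P) are differentiable at x and DS(x)v = ⟨P(x), DQ(x)v⟩ for all v ∈ ℝⁿ; that is, ι*θ = dS holds almost everywhere. -/
open scoped RealInnerProductSpace NNReal
open MeasureTheory Filter Metric Topology

/-!
Almost every `x₀ ∈ U` is, by Rademacher's theorem, a point of differentiability of `S`, `Q`, `P`,
which are Lipschitz as limits of equi-Lipschitz maps. Put `c = P x₀`. Exactness of the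
approximants gives `d(S_k - ⟪c, Q_k⟫) = ⟪P_k - c, dQ_k⟫`, of norm at most `K ‖P_k - c‖`. On a
small ball around `x₀` the `P_k` are eventually uniformly `ε`-close to `c`, so by the mean value
inequality `S_k - ⟪c, Q_k⟫`, and hence its limit `S - ⟪c, Q⟫`, is `εK`-Lipschitz there. So the
derivative of `S - ⟪c, Q⟫` at `x₀` vanishes, which is the identity `DS(x₀) = ⟪P x₀, DQ(x₀)·⟫`.
-/

theorem LipschitzOnWith.of_tendsto {α β ι : Type*} [PseudoEMetricSpace α] [PseudoEMetricSpace β]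
    {l : Filter ι} [l.NeBot] {f : ι → α → β} {g : α → β} {K : ℝ≥0} {s : Set α}
    (hf : ∀ᶠ i in l, LipschitzOnWith K (f i) s)
    (hg : ∀ x ∈ s, Tendsto (f · x) l (𝓝 (g x))) : LipschitzOnWith K g s :=
  fun _x hx _y hy => le_of_tendsto ((hg _ hx).edist (hg _ hy)) (hf.mono fun _i hi => hi hx hy)

section

variable {E F : Type*} [NormedAddCommGroup E] [NormedSpace ℝ E]
  [NormedAddCommGroup F] [InnerProductSpace ℝ F]

theorem HasFDerivAt.eq_zero_of_forall_lipschitzOnWith {G : Type*} [NormedAddCommGroup G]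
    [NormedSpace ℝ G] {f : E → G} {f' : E →L[ℝ] G} {x : E} (hf : HasFDerivAt f f' x) (C : ℝ≥0)
    (hlip : ∀ ε : ℝ≥0, 0 < ε → ∃ s ∈ 𝓝 x, LipschitzOnWith (ε * C) f s) : f' = 0 := by
  have hsmall : Tendsto (fun ε : ℝ≥0 => ε * C) (𝓝[>] 0) (𝓝 0) := by
    simpa using (tendsto_id.mul_const C).mono_left (nhdsWithin_le_nhds (a := (0 : ℝ≥0)))
  have hbound : ∀ᶠ ε in 𝓝[>] (0 : ℝ≥0), ‖f'‖₊ ≤ ε * C :=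
    eventually_nhdsWithin_of_forall fun ε hε => by
      obtain ⟨s, hs, hfs⟩ := hlip ε hε
      exact_mod_cast hf.le_of_lipschitzOn hs hfs
  exact nnnorm_eq_zero.1 (nonpos_iff_eq_zero.1 (ge_of_tendsto hsmall hbound))

theorem hasFDerivAt_sub_inner_of_fderiv_eq_inner {f : E → ℝ} {q p : E → F} {z : E}
    (hf : DifferentiableAt ℝ f z) (hq : DifferentiableAt ℝ q z)
    (hexact : ∀ v, fderiv ℝ f z v = ⟪p z, fderiv ℝ q z v⟫) (c : F) :
    HasFDerivAt (fun x => f x - ⟪c, q x⟫) ((innerSL ℝ (p z - c)).comp (fderiv ℝ q z)) z := by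
  have hderiv : (innerSL ℝ (p z - c)).comp (fderiv ℝ q z) =
      fderiv ℝ f z - (innerSL ℝ c).comp (fderiv ℝ q z) := by
    ext v
    simp [hexact]
  rw [hderiv]
  exact hf.hasFDerivAt.sub ((innerSL ℝ c).hasFDerivAt.comp z hq.hasFDerivAt)

variable {ι : Type*} {l : Filter ι} [l.NeBot] {Sk : ι → E → ℝ} {Qk Pk : ι → E → F}
  {S : E → ℝ} {Q P : E → F} {K : ℝ≥0}

theorem lipschitzOnWith_sub_inner_of_tendsto {s : Set E} (hso : IsOpen s) (hsc : Convex ℝ s)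
    (hSd : ∀ k, DifferentiableOn ℝ (Sk k) s) (hQd : ∀ k, DifferentiableOn ℝ (Qk k) s)
    (hQLip : ∀ k, LipschitzOnWith K (Qk k) s)
    (hexact : ∀ k, ∀ z ∈ s, ∀ v, fderiv ℝ (Sk k) z v = ⟪Pk k z, fderiv ℝ (Qk k) z v⟫)
    (hS : ∀ z ∈ s, Tendsto (Sk · z) l (𝓝 (S z))) (hQ : ∀ z ∈ s, Tendsto (Qk · z) l (𝓝 (Q z)))
    {c : F} {ρ : ℝ≥0} (hPk : ∀ᶠ k in l, ∀ z ∈ s, dist (Pk k z) c ≤ ρ) :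
    LipschitzOnWith (ρ * K) (fun x => S x - ⟪c, Q x⟫) s := by
  refine .of_tendsto (f := fun k x => Sk k x - ⟪c, Qk k x⟫) (hPk.mono fun k hk => ?_)
    fun z hz => (hS z hz).sub (tendsto_const_nhds.inner (hQ z hz))
  refine hsc.lipschitzOnWith_of_nnnorm_hasFDerivWithin_le
    (f' := fun z => (innerSL ℝ (Pk k z - c)).comp (fderiv ℝ (Qk k) z)) (fun z hz => ?_)
    (fun z hz => ?_)
  · exact (hasFDerivAt_sub_inner_of_fderiv_eq_inner ((hSd k).differentiableAt (hso.mem_nhds hz))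
      ((hQd k).differentiableAt (hso.mem_nhds hz)) (hexact k z hz) c).hasFDerivWithinAt
  · have hDQ : ‖fderiv ℝ (Qk k) z‖₊ ≤ K := by
      exact_mod_cast norm_fderiv_le_of_lipschitzOn ℝ (hso.mem_nhds hz) (hQLip k)
    have hPz : ‖innerSL ℝ (Pk k z - c)‖₊ ≤ ρ := by
      rw [← NNReal.coe_le_coe, coe_nnnorm, innerSL_apply_norm, ← dist_eq_norm]
      exact hk z hz
    calc ‖(innerSL ℝ (Pk k z - c)).comp (fderiv ℝ (Qk k) z)‖₊
        ≤ ‖innerSL ℝ (Pk k z - c)‖₊ * ‖fderiv ℝ (Qk k) z‖₊ :=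
          ContinuousLinearMap.opNNNorm_comp_le _ _
      _ ≤ ρ * K := by gcongr

theorem fderiv_apply_eq_inner_of_tendsto {U : Set E} (hU : IsOpen U)
    (hSd : ∀ k, DifferentiableOn ℝ (Sk k) U) (hQd : ∀ k, DifferentiableOn ℝ (Qk k) U)
    (hQLip : ∀ k, LipschitzOnWith K (Qk k) U)
    (hexact : ∀ k, ∀ z ∈ U, ∀ v, fderiv ℝ (Sk k) z v = ⟪Pk k z, fderiv ℝ (Qk k) z v⟫)
    (hS : ∀ z ∈ U, Tendsto (Sk · z) l (𝓝 (S z))) (hQ : ∀ z ∈ U, Tendsto (Qk · z) l (𝓝 (Q z)))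
    (hP : TendstoUniformlyOn Pk P l U) {x₀ : E} (hx₀ : x₀ ∈ U) (hPx₀ : ContinuousAt P x₀)
    (hSx₀ : DifferentiableAt ℝ S x₀) (hQx₀ : DifferentiableAt ℝ Q x₀) (v : E) :
    fderiv ℝ S x₀ v = ⟪P x₀, fderiv ℝ Q x₀ v⟫ := by
  set c := P x₀
  have hg : HasFDerivAt (fun x => S x - ⟪c, Q x⟫)
      (fderiv ℝ S x₀ - (innerSL ℝ c).comp (fderiv ℝ Q x₀)) x₀ :=
    hSx₀.hasFDerivAt.sub ((innerSL ℝ c).hasFDerivAt.comp x₀ hQx₀.hasFDerivAt)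
  have hzero := hg.eq_zero_of_forall_lipschitzOnWith K fun ε hε => by
    have hε2 : (0 : ℝ) < ε / 2 := by positivity
    obtain ⟨r, hr, hball⟩ := Metric.mem_nhds_iff.1
      (inter_mem (hU.mem_nhds hx₀) (hPx₀ (ball_mem_nhds c hε2)))
    have hballU : ball x₀ r ⊆ U := fun z hz => (hball hz).1
    refine ⟨ball x₀ r, ball_mem_nhds x₀ hr, lipschitzOnWith_sub_inner_of_tendsto isOpen_ball
      (convex_ball x₀ r) (fun k => (hSd k).mono hballU) (fun k => (hQd k).mono hballU)
      (fun k => (hQLip k).mono hballU) (fun k z hz => hexact k z (hballU hz))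
      (fun z hz => hS z (hballU hz)) (fun z hz => hQ z (hballU hz)) ?_⟩
    filter_upwards [Metric.tendstoUniformlyOn_iff.1 hP _ hε2] with k hk z hz
    calc dist (Pk k z) c ≤ dist (Pk k z) (P z) + dist (P z) c := dist_triangle _ _ _
      _ ≤ ε / 2 + ε / 2 := by
        gcongr
        · exact (dist_comm (P z) _ ▸ hk z (hballU hz)).le
        · exact (mem_ball.1 (hball hz).2).le
      _ = ε := add_halves _
  simpa [sub_eq_zero] using DFunLike.congr_fun hzero v

end

theorem lipschitz_exact_brane_exact_ae_general (n : ℕ) (U : Set (EuclideanSpace ℝ (Fin n)))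
    (hU : IsOpen U) (K : ℝ≥0)
    (Q P : EuclideanSpace ℝ (Fin n) → EuclideanSpace ℝ (Fin n))
    (S : EuclideanSpace ℝ (Fin n) → ℝ)
    (Qk Pk : ℕ → EuclideanSpace ℝ (Fin n) → EuclideanSpace ℝ (Fin n))
    (Sk : ℕ → EuclideanSpace ℝ (Fin n) → ℝ)
    (hC1 : ∀ k, ContDiffOn ℝ 1 (fun x => (Qk k x, Pk k x)) U)
    (hS1 : ∀ k, ContDiffOn ℝ 1 (Sk k) U)
    (hιLip : ∀ k, LipschitzOnWith K (fun x => (Qk k x, Pk k x)) U)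
    (hSLip : ∀ k, LipschitzOnWith K (Sk k) U)
    (hexact : ∀ k, ∀ x ∈ U, ∀ v,
      fderiv ℝ (Sk k) x v = ⟪Pk k x, fderiv ℝ (Qk k) x v⟫)
    (hιconv : TendstoUniformlyOn (fun k x => (Qk k x, Pk k x)) (fun x => (Q x, P x)) atTop U)
    (hSconv : TendstoUniformlyOn Sk S atTop U) :
    ∀ᵐ x ∂volume, x ∈ U →
      DifferentiableAt ℝ S x ∧ DifferentiableAt ℝ Q x ∧ DifferentiableAt ℝ P x ∧
        ∀ v, fderiv ℝ S x v = ⟪P x, fderiv ℝ Q x v⟫ := by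
  have hQconv : TendstoUniformlyOn Qk Q atTop U :=
    uniformContinuous_fst.comp_tendstoUniformlyOn hιconv
  have hPconv : TendstoUniformlyOn Pk P atTop U :=
    uniformContinuous_snd.comp_tendstoUniformlyOn hιconv
  have hQkLip (k : ℕ) : LipschitzOnWith K (Qk k) U := by
    simpa [Function.comp_def] using LipschitzWith.prod_fst.comp_lipschitzOnWith (hιLip k)
  have hPkLip (k : ℕ) : LipschitzOnWith K (Pk k) U := by
    simpa [Function.comp_def] using LipschitzWith.prod_snd.comp_lipschitzOnWith (hιLip k)
  have hS_lip : LipschitzOnWith K S U :=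
    .of_tendsto (.of_forall hSLip) fun x hx => hSconv.tendsto_at hx
  have hQ_lip : LipschitzOnWith K Q U :=
    .of_tendsto (.of_forall hQkLip) fun x hx => hQconv.tendsto_at hx
  have hP_lip : LipschitzOnWith K P U :=
    .of_tendsto (.of_forall hPkLip) fun x hx => hPconv.tendsto_at hx
  filter_upwards [hS_lip.ae_differentiableWithinAt_of_mem, hQ_lip.ae_differentiableWithinAt_of_mem,
    hP_lip.ae_differentiableWithinAt_of_mem] with x hS hQ hP hx
  have hUx := hU.mem_nhds hx
  have hSx := (hS hx).differentiableAt hUx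
  have hQx := (hQ hx).differentiableAt hUx
  have hPx := (hP hx).differentiableAt hUx
  exact ⟨hSx, hQx, hPx, fderiv_apply_eq_inner_of_tendsto hU
    (fun k => (hS1 k).differentiableOn one_ne_zero)
    (fun k => ((hC1 k).differentiableOn one_ne_zero).fst) hQkLip hexact
    (fun z hz => hSconv.tendsto_at hz) (fun z hz => hQconv.tendsto_at hz) hPconv hx
    hPx.continuousAt hSx hQx⟩

/-- A Lipschitz-exact Lagrangian brane satisfies `ι*θ = dS` almost
everywhere: if equi-Lipschitz `C¹` maps `ι_k = (Q_k, P_k)` with primitives `S_k`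
(`ι_k*θ = dS_k` on the open set `U`) converge uniformly to `ι = (Q, P)` and `S`, then for
almost every `x ∈ U` the limits are differentiable at `x` and `DS(x)v = ⟪P x, DQ(x)v⟫`. -/
theorem lipschitz_exact_brane_exact_ae (n : ℕ) (U : Set (EuclideanSpace ℝ (Fin n)))
    (hU : IsOpen U) (K : ℝ≥0) (hK : 0 < K)
    (Q P : EuclideanSpace ℝ (Fin n) → EuclideanSpace ℝ (Fin n))
    (S : EuclideanSpace ℝ (Fin n) → ℝ)
    (Qk Pk : ℕ → EuclideanSpace ℝ (Fin n) → EuclideanSpace ℝ (Fin n))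
    (Sk : ℕ → EuclideanSpace ℝ (Fin n) → ℝ)
    (hC1 : ∀ k, ContDiffOn ℝ 1 (fun x => (Qk k x, Pk k x)) U)
    (hS1 : ∀ k, ContDiffOn ℝ 1 (Sk k) U)
    (hιLip : ∀ k, LipschitzOnWith K (fun x => (Qk k x, Pk k x)) U)
    (hSLip : ∀ k, LipschitzOnWith K (Sk k) U)
    (hexact : ∀ k, ∀ x ∈ U, ∀ v,
      fderiv ℝ (Sk k) x v = ⟪Pk k x, fderiv ℝ (Qk k) x v⟫)
    (hιconv : TendstoUniformlyOn (fun k x => (Qk k x, Pk k x)) (fun x => (Q x, P x)) atTop U)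
    (hSconv : TendstoUniformlyOn Sk S atTop U) :
    ∀ᵐ x ∂volume, x ∈ U →
      DifferentiableAt ℝ S x ∧ DifferentiableAt ℝ Q x ∧ DifferentiableAt ℝ P x ∧
        ∀ v, fderiv ℝ S x v = ⟪P x, fderiv ℝ Q x v⟫ :=
  lipschitz_exact_brane_exact_ae_general n U hU K Q P S Qk Pk Sk hC1 hS1 hιLip hSLip hexact hιconv
    hSconv
end

section
/- Let v : ℝⁿ → ℝ be a differentiable function whose gradient ∇v is bounded and Lipschitz, and set Γ_v(q) := (q, ∇v(q)). Let φ : ℝⁿ × ℝⁿ → ℝⁿ × ℝⁿ and g : ℝⁿ × ℝⁿ → ℝ be smooth Lipschitz maps satisfying φ*θ − θ = dg, i.e. θ_{φ(y)}(Dφ(y)w) = θ_y(w) + Dg(y)w for all y and all tangent vectors w. Set ι := φ ∘ Γ_v and S := v + g ∘ Γ_v. Then there exist a constant K > 0 and sequences of smooth maps ι_k : ℝⁿ → ℝⁿ × ℝⁿ and smooth functions S_k : ℝⁿ → ℝ, all K-Lipschitz, such that writing ι_k = (Q_k,P_k) one has DS_k(x)v' = ⟨P_k(x), DQ_k(x)v'⟩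 for all k, x, v' (i.e. ι_k*θ = dS_k), and ι_k → ι and S_k → S uniformly on ℝⁿ. In particular (ℝⁿ, ι, S) is a Lipschitz-exact Lagrangian brane. -/
/-!
Mollify `v` by normed bump functions of radius `→ 0`. Convolution with a probability density
preserves Lipschitz constants and commutes with `fderiv`, so the mollified `u k` are smooth,
equi-Lipschitz with equi-Lipschitz gradients, and `u k → v`, `∇(u k) → ∇v` uniformly. The graph
`Γ k` of `∇(u k)` is exact with primitive `u k`; composing with the exact map `φ` keeps it exact
with primitive `u k + g ∘ Γ k`, and uniform convergence passes through the Lipschitz `φ` and `g`.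
-/

open Filter MeasureTheory ContinuousLinearMap Metric
open scoped RealInnerProductSpace NNReal Convolution Topology ContDiff

namespace ContDiffBump

variable {E F : Type*} [NormedAddCommGroup E] [NormedSpace ℝ E] [FiniteDimensional ℝ E]
  [MeasurableSpace E] [BorelSpace E] {μ : Measure E} [μ.IsAddHaarMeasure]
  [NormedAddCommGroup F] [NormedSpace ℝ F]
  (ρ : ContDiffBump (0 : E)) {f : E → F} {K : ℝ≥0}

theorem integrable_normed_smul_comp_sub (hf : Continuous f) (x : E) :
    Integrable (fun t => ρ.normed μ t • f (x - t)) μ :=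
  (ρ.continuous_normed.smul (hf.comp (continuous_const.sub continuous_id))
    ).integrable_of_hasCompactSupport ρ.hasCompactSupport_normed.smul_right

theorem lipschitzWith_normed_convolution (hf : LipschitzWith K f) :
    LipschitzWith K (ρ.normed μ ⋆[lsmul ℝ ℝ, μ] f) := by
  refine LipschitzWith.of_dist_le_mul fun x y => ?_
  simp only [convolution_def, lsmul_apply, dist_eq_norm]
  rw [← integral_sub (ρ.integrable_normed_smul_comp_sub hf.continuous x)
    (ρ.integrable_normed_smul_comp_sub hf.continuous y)]
  calc ‖∫ t, ρ.normed μ t • f (x - t) - ρ.normed μ t • f (y - t) ∂μ‖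
      ≤ ∫ t, ρ.normed μ t * (K * ‖x - y‖) ∂μ := by
        refine norm_integral_le_of_norm_le (ρ.integrable_normed.mul_const _)
          (Eventually.of_forall fun t => ?_)
        rw [← smul_sub, norm_smul, Real.norm_of_nonneg (ρ.nonneg_normed t)]
        gcongr
        · exact ρ.nonneg_normed t
        simpa [dist_eq_norm] using hf.dist_le_mul (x - t) (y - t)
    _ = K * ‖x - y‖ := by rw [integral_mul_const, ρ.integral_normed, one_mul]

theorem dist_normed_convolution_le_of_lipschitzWith [CompleteSpace F] (hf : LipschitzWith K f)
    (x : E) :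
    dist ((ρ.normed μ ⋆[lsmul ℝ ℝ, μ] f) x) (f x) ≤ K * ρ.rOut :=
  ρ.dist_normed_convolution_le hf.continuous.aestronglyMeasurable fun y hy =>
    (hf.dist_le_mul y x).trans (by gcongr; exact (mem_ball.1 hy).le)

theorem hasFDerivAt_normed_convolution [CompleteSpace F] (hf : Differentiable ℝ f)
    (hf_lip : LipschitzWith K f) (hf' : Continuous (fderiv ℝ f)) (x₀ : E) :
    HasFDerivAt (ρ.normed μ ⋆[lsmul ℝ ℝ, μ] f)
      ((ρ.normed μ ⋆[lsmul ℝ ℝ, μ] fderiv ℝ f) x₀) x₀ := by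
  show HasFDerivAt (fun x => ∫ t, ρ.normed μ t • f (x - t) ∂μ)
    (∫ t, ρ.normed μ t • fderiv ℝ f (x₀ - t) ∂μ) x₀
  refine hasFDerivAt_integral_of_dominated_of_fderiv_le
    (F' := fun x t => ρ.normed μ t • fderiv ℝ f (x - t)) (bound := fun t => ρ.normed μ t * K)
    univ_mem (Eventually.of_forall fun x =>
      (ρ.integrable_normed_smul_comp_sub hf_lip.continuous x).aestronglyMeasurable)
    (ρ.integrable_normed_smul_comp_sub hf_lip.continuous x₀)
    (ρ.integrable_normed_smul_comp_sub hf' x₀).aestronglyMeasurable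
    (Eventually.of_forall fun t x _ => ?_) (ρ.integrable_normed.mul_const _)
    (Eventually.of_forall fun t x _ => ?_)
  · rw [norm_smul, Real.norm_of_nonneg (ρ.nonneg_normed t)]
    exact mul_le_mul_of_nonneg_left (norm_fderiv_le_of_lipschitz ℝ hf_lip) (ρ.nonneg_normed t)
  · have h := (hf (x - t)).hasFDerivAt.comp x ((hasFDerivAt_id x).sub_const t)
    rw [comp_id] at h
    exact h.const_smul (ρ.normed μ t)

theorem tendstoUniformly_normed_convolution [CompleteSpace F] {ι : Type*} {l : Filter ι}
    {ρ : ι → ContDiffBump (0 : E)} (hρ : Tendsto (fun i => (ρ i).rOut) l (𝓝 0))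
    (hf : LipschitzWith K f) :
    TendstoUniformly (fun i => (ρ i).normed μ ⋆[lsmul ℝ ℝ, μ] f) f l := by
  rw [Metric.tendstoUniformly_iff]
  intro ε hε
  have hKρ : Tendsto (fun i => K * (ρ i).rOut) l (𝓝 0) := by simpa using hρ.const_mul (K : ℝ)
  filter_upwards [hKρ.eventually_lt_const hε] with i hi x
  rw [dist_comm]
  exact ((ρ i).dist_normed_convolution_le_of_lipschitzWith hf x).trans_lt hi

end ContDiffBump

section Approximation

variable {E F : Type*} [NormedAddCommGroup E] [NormedSpace ℝ E] [FiniteDimensional ℝ E]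
  [NormedAddCommGroup F] [NormedSpace ℝ F] [CompleteSpace F] {f : E → F} {C K : ℝ≥0}

theorem exists_contDiff_tendstoUniformly_of_lipschitzWith_fderiv (hf : Differentiable ℝ f)
    (hf_lip : LipschitzWith C f) (hf' : LipschitzWith K (fderiv ℝ f)) :
    ∃ u : ℕ → E → F, (∀ k, ContDiff ℝ ∞ (u k)) ∧ (∀ k, LipschitzWith C (u k)) ∧
      (∀ k, LipschitzWith K (fderiv ℝ (u k))) ∧ TendstoUniformly u f atTop ∧
      TendstoUniformly (fun k => fderiv ℝ (u k)) (fderiv ℝ f) atTop := by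
  borelize E
  let ρ : ℕ → ContDiffBump (0 : E) := fun k =>
    ⟨1 / (k + 2), 1 / (k + 1), by positivity, by gcongr; linarith⟩
  have hρ : Tendsto (fun k => (ρ k).rOut) atTop (𝓝 0) := tendsto_one_div_add_atTop_nhds_zero_nat
  let μ : Measure E := .addHaar
  have hderiv : ∀ k, fderiv ℝ ((ρ k).normed μ ⋆[lsmul ℝ ℝ, μ] f) =
      (ρ k).normed μ ⋆[lsmul ℝ ℝ, μ] fderiv ℝ f := fun k => funext fun x =>
    ((ρ k).hasFDerivAt_normed_convolution hf hf_lip hf'.continuous x).fderiv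
  refine ⟨fun k => (ρ k).normed μ ⋆[lsmul ℝ ℝ, μ] f, fun k => ?_,
    fun k => (ρ k).lipschitzWith_normed_convolution hf_lip, fun k => ?_,
    ContDiffBump.tendstoUniformly_normed_convolution hρ hf_lip, ?_⟩
  · exact (ρ k).hasCompactSupport_normed.contDiff_convolution_left _ (ρ k).contDiff_normed
      hf.continuous.locallyIntegrable
  · rw [hderiv]
    exact (ρ k).lipschitzWith_normed_convolution hf'
  · simp_rw [hderiv]
    exact ContDiffBump.tendstoUniformly_normed_convolution hρ hf'

end Approximation

section Gradient

open InnerProductSpace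

variable {E : Type*} [NormedAddCommGroup E] [InnerProductSpace ℝ E] [CompleteSpace E]
  {f : E → ℝ} {K : ℝ≥0}

theorem lipschitzWith_gradient_iff :
    LipschitzWith K (gradient f) ↔ LipschitzWith K (fderiv ℝ f) :=
  (toDual ℝ E).symm.isometry.lipschitzWith_iff K

theorem lipschitzWith_of_norm_gradient_le (hf : Differentiable ℝ f) {C : ℝ}
    (h : ∀ x, ‖gradient f x‖ ≤ C) : LipschitzWith C.toNNReal f :=
  lipschitzWith_of_nnnorm_fderiv_le hf fun x =>
    NNReal.le_toNNReal_of_coe_le (((toDual ℝ E).symm.norm_map _).symm.trans_le (h x))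

theorem TendstoUniformly.gradient {ι : Type*} {l : Filter ι} {u : ι → E → ℝ}
    (h : TendstoUniformly (fun i => fderiv ℝ (u i)) (fderiv ℝ f) l) :
    TendstoUniformly (fun i => gradient (u i)) (gradient f) l :=
  (toDual ℝ E).symm.isometry.uniformContinuous.comp_tendstoUniformly h

theorem ContDiff.gradient (hf : ContDiff ℝ ∞ f) : ContDiff ℝ ∞ (gradient f) :=
  (toDual ℝ E).symm.contDiff.comp (hf.fderiv_right le_rfl)

theorem exists_contDiff_tendstoUniformly_of_lipschitzWith_gradient [FiniteDimensional ℝ E]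
    {C : ℝ≥0} (hf : Differentiable ℝ f) (hf_lip : LipschitzWith C f)
    (hf' : LipschitzWith K (gradient f)) :
    ∃ u : ℕ → E → ℝ, (∀ k, ContDiff ℝ ∞ (u k)) ∧ (∀ k, LipschitzWith C (u k)) ∧
      (∀ k, LipschitzWith K (gradient (u k))) ∧ TendstoUniformly u f atTop ∧
      TendstoUniformly (fun k => gradient (u k)) (gradient f) atTop := by
  obtain ⟨u, hu, hu_lip, hu', hu_tendsto, hu'_tendsto⟩ :=
    exists_contDiff_tendstoUniformly_of_lipschitzWith_fderiv hf hf_lip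
      (lipschitzWith_gradient_iff.1 hf')
  exact ⟨u, hu, hu_lip, fun k => lipschitzWith_gradient_iff.2 (hu' k), hu_tendsto,
    hu'_tendsto.gradient⟩

end Gradient

theorem TendstoUniformly.graph {ι α β : Type*} [PseudoMetricSpace α] [PseudoMetricSpace β]
    {l : Filter ι} {F : ι → α → β} {f : α → β} (h : TendstoUniformly F f l) :
    TendstoUniformly (fun i x => (x, F i x)) (fun x => (x, f x)) l := by
  rw [Metric.tendstoUniformly_iff] at h ⊢
  intro ε hε
  filter_upwards [h ε hε] with i hi x
  simpa [Prod.dist_eq, hε] using hi x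

section Liouville

open InnerProductSpace

variable {X E : Type*} [NormedAddCommGroup X] [NormedSpace ℝ X]
  [NormedAddCommGroup E] [InnerProductSpace ℝ E]

/-- `ι^*θ = dS` for the Liouville form `θ_(q, p) = ⟪p, dq⟫` on `E × E`. -/
def IsLiouvillePrimitive (ι : X → E × E) (S : X → ℝ) : Prop :=
  ∀ x w, fderiv ℝ S x w = ⟪(ι x).2, fderiv ℝ (fun x => (ι x).1) x w⟫

theorem isLiouvillePrimitive_graph_gradient [CompleteSpace E] (f : E → ℝ) :
    IsLiouvillePrimitive (fun x => (x, gradient f x)) f := fun x w => by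
  rw [fderiv_fun_id]
  exact toDual_symm_apply.symm

theorem IsLiouvillePrimitive.comp {ι : X → E × E} {S : X → ℝ} (h : IsLiouvillePrimitive ι S)
    (hι : Differentiable ℝ ι) (hS : Differentiable ℝ S) {φ : E × E → E × E} {g : E × E → ℝ}
    (hφ : Differentiable ℝ φ) (hg : Differentiable ℝ g)
    (hexact : ∀ y w, ⟪(φ y).2, (fderiv ℝ φ y w).1⟫ = ⟪y.2, w.1⟫ + fderiv ℝ g y w) :
    IsLiouvillePrimitive (φ ∘ ι) (fun x => S x + g (ι x)) := fun x w => by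
  have hSg : HasFDerivAt (fun x => S x + g (ι x))
      (fderiv ℝ S x + (fderiv ℝ g (ι x)).comp (fderiv ℝ ι x)) x :=
    (hS x).hasFDerivAt.add ((hg (ι x)).hasFDerivAt.comp x (hι x).hasFDerivAt)
  rw [hSg.fderiv, ((hφ (ι x)).hasFDerivAt.comp x (hι x).hasFDerivAt).fst.fderiv]
  simp only [add_apply, comp_apply, coe_fst', Function.comp_apply]
  rw [hexact, h x w, (hι x).hasFDerivAt.fst.fderiv]
  rfl

end Liouville

/-- Graphs of `C^{1,1}` functions composed with exact symplectomorphisms are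
Lipschitz-exact: `ι := φ ∘ Γ_v` and `S := v + g ∘ Γ_v` admit an approximating equi-Lipschitz
sequence of smooth exact Lagrangian embeddings with smooth primitives. -/
theorem graph_compose_exact_symplectomorphism_is_lipschitz_exact (n : ℕ)
    (v : EuclideanSpace ℝ (Fin n) → ℝ) (hv : Differentiable ℝ v)
    (Cv : ℝ) (hvbdd : ∀ x, ‖gradient v x‖ ≤ Cv)
    (Kv : ℝ≥0) (hvlip : LipschitzWith Kv (gradient v))
    (φ : EuclideanSpace ℝ (Fin n) × EuclideanSpace ℝ (Fin n) →
      EuclideanSpace ℝ (Fin n) × EuclideanSpace ℝ (Fin n))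
    (hφ : ContDiff ℝ (⊤ : ℕ∞) φ) (Kφ : ℝ≥0) (hφlip : LipschitzWith Kφ φ)
    (g : EuclideanSpace ℝ (Fin n) × EuclideanSpace ℝ (Fin n) → ℝ)
    (hg : ContDiff ℝ (⊤ : ℕ∞) g) (Kg : ℝ≥0) (hglip : LipschitzWith Kg g)
    (hexact : ∀ y w, ⟪(φ y).2, (fderiv ℝ φ y w).1⟫ = ⟪y.2, w.1⟫ + fderiv ℝ g y w) :
    ∃ (K : ℝ≥0), 0 < K ∧
      ∃ (Qk Pk : ℕ → EuclideanSpace ℝ (Fin n) → EuclideanSpace ℝ (Fin n))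
        (Sk : ℕ → EuclideanSpace ℝ (Fin n) → ℝ),
        (∀ k, ContDiff ℝ (⊤ : ℕ∞) (fun x => (Qk k x, Pk k x))) ∧
        (∀ k, ContDiff ℝ (⊤ : ℕ∞) (Sk k)) ∧
        (∀ k, LipschitzWith K (fun x => (Qk k x, Pk k x))) ∧
        (∀ k, LipschitzWith K (Sk k)) ∧
        (∀ k x v', fderiv ℝ (Sk k) x v' = ⟪Pk k x, fderiv ℝ (Qk k) x v'⟫) ∧
        TendstoUniformly (fun k x => (Qk k x, Pk k x))
          (fun x => φ (x, gradient v x)) atTop ∧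
        TendstoUniformly Sk (fun x => v x + g (x, gradient v x)) atTop := by
  obtain ⟨u, hu, hu_lip, hgrad_lip, hu_tendsto, hgrad_tendsto⟩ :=
    exists_contDiff_tendstoUniformly_of_lipschitzWith_gradient hv
      (lipschitzWith_of_norm_gradient_le hv hvbdd) hvlip
  set Γ := fun k x => (x, gradient (u k) x)
  have hΓ : ∀ k, ContDiff ℝ ∞ (Γ k) := fun k => contDiff_id.prodMk (hu k).gradient
  have hΓ_lip : ∀ k, LipschitzWith (max 1 Kv) (Γ k) := fun k =>
    LipschitzWith.id.prodMk (hgrad_lip k)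
  have hΓ_tendsto : TendstoUniformly Γ (fun x => (x, gradient v x)) atTop := hgrad_tendsto.graph
  set L := max 1 (max (Kφ * max 1 Kv) (Cv.toNNReal + Kg * max 1 Kv))
  refine ⟨L, zero_lt_one.trans_le (le_max_left _ _), fun k x => (φ (Γ k x)).1,
    fun k x => (φ (Γ k x)).2, fun k x => u k x + g (Γ k x), fun k => hφ.comp (hΓ k),
    fun k => (hu k).add (hg.comp (hΓ k)), fun k => ?_, fun k => ?_, fun k => ?_,
    hφlip.uniformContinuous.comp_tendstoUniformly hΓ_tendsto,
    hu_tendsto.fun_add (hglip.uniformContinuous.comp_tendstoUniformly hΓ_tendsto)⟩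
  · exact (hφlip.comp (hΓ_lip k)).weaken ((le_max_left _ _).trans (le_max_right _ _))
  · exact ((hu_lip k).add (hglip.comp (hΓ_lip k))).weaken
      ((le_max_right _ _).trans (le_max_right _ _))
  · have hinfty : (∞ : WithTop ℕ∞) ≠ 0 := by simp
    exact (isLiouvillePrimitive_graph_gradient (u k)).comp ((hΓ k).differentiable hinfty)
      ((hu k).differentiable hinfty) (hφ.differentiable hinfty) (hg.differentiable hinfty) hexact
end

section
/- Let N be a compact smooth n-dimensional manifold without boundary, ι : N → ℝⁿ × ℝⁿ a smooth injective immersion with components ι = (Q̃, P̃), and S : N → ℝ a smooth function satisfying the exactness condition d_xS(v) = ⟨P̃(x), d_xQ̃(v)⟩ for all x ∈ N and v ∈ T_xN (i.e. dS = ι*θ). Let π := Q̃ : N → ℝⁿ and let 𝒰 := {q ∈ ℝⁿ : for every x ∈ π⁻¹(q), d_xπ is a linear isomorphism}. Define the set of Cerf-regular values 𝒰^Cf := {q ∈ 𝒰 : S restricted to π⁻¹(q) is injective}. Then 𝒰^Cf is open and dense in ℝⁿ and its complement has Lebesgue measure zero. -/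
/-!
The critical set of `π` is compact, so the regular values `𝒰` form an open set, and its image
is null by Sard's lemma in equal dimension. Over `𝒰`, `π` is a local diffeomorphism near every
point of a fibre; pairs in the closure of the set of fibre collisions are therefore genuine
collisions, and compactness makes Cerf-regularity an open condition on `𝒰`. Near a collision
`(a, b)` write `a = σ₁ q`, `b = σ₂ q` with local inverses `σᵢ` of `π`. Exactness gives
`d(S ∘ σᵢ) = ⟪P ∘ σᵢ, ·⟫`, and `P a ≠ P b` because `ι = (π, P)` is injective, so the collision
values lie in the zero set of `S ∘ σ₁ - S ∘ σ₂`, a function with non-vanishing differential there;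
such a zero set is null. A set of full measure is dense.
-/

open MeasureTheory Set Function Filter
open scoped Manifold RealInnerProductSpace Topology ContDiff

section LevelSet

variable {E : Type*} [NormedAddCommGroup E] [NormedSpace ℝ E] [FiniteDimensional ℝ E]
  [MeasurableSpace E] [BorelSpace E] (μ : Measure E) [μ.IsAddHaarMeasure]

/-- Near a point where `dg ≠ 0`, the map `q ↦ q + (g q - dg q) • u` with `dg u = 1` is a local
`C¹` diffeomorphism carrying the zero set of `g` into the hyperplane `ker dg`. -/
theorem ContDiffAt.exists_mem_nhds_addHaar_inter_zero_preimage_eq_zero {g : E → ℝ} {q₀ : E}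
    (hg : ContDiffAt ℝ 1 g q₀) (hg' : fderiv ℝ g q₀ ≠ 0) :
    ∃ W ∈ 𝓝 q₀, μ (W ∩ g ⁻¹' {0}) = 0 := by
  set A := fderiv ℝ g q₀
  obtain ⟨v, hv⟩ := DFunLike.ne_iff.mp hg'
  set u := (A v)⁻¹ • v
  have hAu : A u = 1 := by simp [u, inv_mul_cancel₀ hv]
  set ψ : E → E := fun q => q + (g q - A q) • u
  have hψ : HasFDerivAt ψ ((ContinuousLinearEquiv.refl ℝ E : E ≃L[ℝ] E) : E →L[ℝ] E) q₀ := by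
    have h : HasFDerivAt ψ (ContinuousLinearMap.id ℝ E + (A - A).smulRight u) q₀ :=
      (hasFDerivAt_id q₀).add
        (((hg.differentiableAt one_ne_zero).hasFDerivAt.sub A.hasFDerivAt).smul_const u)
    simpa using h
  have hψc : ContDiffAt ℝ 1 ψ q₀ := by fun_prop
  set σ := hψc.localInverse hψ one_ne_zero
  have hσ : ∀ᶠ y in 𝓝 (ψ q₀), DifferentiableAt ℝ σ y :=
    ((hψc.to_localInverse hψ one_ne_zero).eventually (by simp)).mono
      fun y hy => hy.differentiableAt one_ne_zero
  have hσψ : ∀ᶠ q in 𝓝 q₀, σ (ψ q) = q :=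
    (hψc.hasStrictFDerivAt' hψ one_ne_zero).eventually_left_inverse
  set s := (LinearMap.ker (A : E →ₗ[ℝ] ℝ) : Set E) ∩ {y | DifferentiableAt ℝ σ y}
  have hker : LinearMap.ker (A : E →ₗ[ℝ] ℝ) ≠ ⊤ := fun h =>
    hg' (ContinuousLinearMap.coe_injective (LinearMap.ker_eq_top.mp h))
  have hs : μ (σ '' s) = 0 :=
    addHaar_image_eq_zero_of_differentiableOn_of_addHaar_eq_zero μ
      (fun y hy => hy.2.differentiableWithinAt)
      (measure_mono_null inter_subset_left (Measure.addHaar_submodule μ _ hker))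
  refine ⟨_, hσψ.and (hψc.continuousAt.eventually hσ), measure_mono_null ?_ hs⟩
  rintro q ⟨⟨hq, hqσ⟩, hgq⟩
  refine ⟨ψ q, ⟨?_, hqσ⟩, hq⟩
  simp only [SetLike.mem_coe, LinearMap.mem_ker, ContinuousLinearMap.coe_coe, ψ, map_add,
    map_smul, hAu, smul_eq_mul, mul_one]
  simpa using hgq

theorem addHaar_setOf_regular_zero_eq_zero (g : E → ℝ) :
    μ {q | g q = 0 ∧ ContDiffAt ℝ 1 g q ∧ fderiv ℝ g q ≠ 0} = 0 := by
  refine measure_null_of_locally_null _ fun q hq => ?_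
  obtain ⟨W, hW, hWμ⟩ := hq.2.1.exists_mem_nhds_addHaar_inter_zero_preimage_eq_zero μ hq.2.2
  refine ⟨_, inter_mem_nhdsWithin _ hW, measure_mono_null ?_ hWμ⟩
  exact fun p hp => ⟨hp.2, hp.1.1⟩

end LevelSet

section InverseFunction

variable {E : Type*} [NormedAddCommGroup E] [NormedSpace ℝ E]
  {F : Type*} [NormedAddCommGroup F] [NormedSpace ℝ F]
  {M : Type*} [TopologicalSpace M] [ChartedSpace E M] [IsManifold 𝓘(ℝ, E) 1 M]

theorem bijective_fderiv_comp_chartAt_symm_iff {π : M → F} (x : M) {w : E}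
    (hw : w ∈ (chartAt E x).target)
    (hπ : MDifferentiableAt 𝓘(ℝ, E) 𝓘(ℝ, F) π ((chartAt E x).symm w)) :
    Bijective (fderiv ℝ (π ∘ (chartAt E x).symm) w) ↔
      Bijective (mfderiv 𝓘(ℝ, E) 𝓘(ℝ, F) π ((chartAt E x).symm w)) := by
  have hc := mdifferentiableAt_atlas_symm (I := 𝓘(ℝ, E)) (chart_mem_atlas E x) hw
  rw [← mfderiv_eq_fderiv, mfderiv_comp w hπ hc]
  exact Bijective.of_comp_iff _ ((mdifferentiable_chart x).symm.mfderiv_bijective hw)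

variable [CompleteSpace E] [CompleteSpace F]

theorem isLocalDiffeomorphAt_of_bijective_mfderiv {π : M → F}
    (hπ : ContMDiff 𝓘(ℝ, E) 𝓘(ℝ, F) 1 π) {x : M}
    (hx : Bijective (mfderiv 𝓘(ℝ, E) 𝓘(ℝ, F) π x)) :
    IsLocalDiffeomorphAt 𝓘(ℝ, E) 𝓘(ℝ, F) 1 π x := by
  set c := chartAt E x
  set f := π ∘ c.symm
  have hxc : x ∈ c.source := mem_chart_source E x
  have hf : ContDiffOn ℝ 1 f c.target :=
    contMDiffOn_iff_contDiffOn.mp (hπ.comp_contMDiffOn contMDiffOn_chart_symm)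
  have hfa : ContDiffAt ℝ 1 f (c x) := hf.contDiffAt (c.open_target.mem_nhds (c.map_source hxc))
  have hbij : Bijective (fderiv ℝ f (c x)) := by
    rw [bijective_fderiv_comp_chartAt_symm_iff x (c.map_source hxc), c.left_inv hxc]
    · exact hx
    · rw [c.left_inv hxc]; exact hπ.mdifferentiableAt one_ne_zero
  set L := ContinuousLinearEquiv.ofBijective (fderiv ℝ f (c x))
    (LinearMap.ker_eq_bot.mpr hbij.1) (LinearMap.range_eq_top.mpr hbij.2)
  have hL : HasFDerivAt f (L : E →L[ℝ] F) (c x) := (hfa.differentiableAt one_ne_zero).hasFDerivAt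
  set φ := hfa.toOpenPartialHomeomorph f hL one_ne_zero
  obtain ⟨t, ht, htopen, hxt⟩ := eventually_nhds_iff.mp
    ((hfa.to_localInverse hL one_ne_zero).eventually (by simp))
  set e := (c.trans φ).trans (OpenPartialHomeomorph.ofSet t htopen)
  have heq : EqOn π e e.source := fun y hy => by
    simp [e, φ, f, c.left_inv hy.1.1]
  have hsymm : ContMDiffOn 𝓘(ℝ, F) 𝓘(ℝ, E) 1 e.symm e.target := fun y ⟨hyt, _, hyc⟩ =>
    ((contMDiffOn_chart_symm.contMDiffAt (c.open_target.mem_nhds hyc)).comp y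
      (contMDiffAt_iff_contDiffAt.mpr (ht y hyt))).contMDiffWithinAt
  exact ⟨{ toPartialEquiv := e.toPartialEquiv,
           open_source := e.open_source,
           open_target := e.open_target,
           contMDiffOn_toFun := hπ.contMDiffOn.congr fun y hy => (heq hy).symm,
           contMDiffOn_invFun := hsymm },
    ⟨⟨hxc, hfa.mem_toOpenPartialHomeomorph_source hL one_ne_zero⟩, hxt⟩, heq⟩

theorem isOpen_setOf_bijective_mfderiv {π : M → F} (hπ : ContMDiff 𝓘(ℝ, E) 𝓘(ℝ, F) 1 π) :
    IsOpen {x | Bijective (mfderiv 𝓘(ℝ, E) 𝓘(ℝ, F) π x)} := by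
  refine isOpen_iff_forall_mem_open.mpr fun x hx => ?_
  obtain ⟨Φ, hxΦ, hπΦ⟩ := isLocalDiffeomorphAt_of_bijective_mfderiv hπ hx
  refine ⟨Φ.source, fun y hy => ?_, Φ.open_source, hxΦ⟩
  exact (IsLocalDiffeomorphAt.mfderivToContinuousLinearEquiv ⟨Φ, hy, hπΦ⟩
    one_ne_zero).bijective

theorem exists_mem_nhds_injOn_of_bijective_mfderiv {π : M → F}
    (hπ : ContMDiff 𝓘(ℝ, E) 𝓘(ℝ, F) 1 π) {x : M}
    (hx : Bijective (mfderiv 𝓘(ℝ, E) 𝓘(ℝ, F) π x)) : ∃ V ∈ 𝓝 x, InjOn π V := by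
  obtain ⟨Φ, hxΦ, hπΦ⟩ := isLocalDiffeomorphAt_of_bijective_mfderiv hπ hx
  exact ⟨Φ.source, Φ.open_source.mem_nhds hxΦ, Φ.injOn.congr hπΦ.symm⟩

theorem isOpen_setOf_forall_bijective_mfderiv [CompactSpace M] {π : M → F}
    (hπ : ContMDiff 𝓘(ℝ, E) 𝓘(ℝ, F) 1 π) :
    IsOpen {q | ∀ x, π x = q → Bijective (mfderiv 𝓘(ℝ, E) 𝓘(ℝ, F) π x)} := by
  have h : {q | ∀ x, π x = q → Bijective (mfderiv 𝓘(ℝ, E) 𝓘(ℝ, F) π x)} =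
      (π '' {x | Bijective (mfderiv 𝓘(ℝ, E) 𝓘(ℝ, F) π x)}ᶜ)ᶜ := by
    ext q; simp [not_imp_not]
  rw [h]
  exact ((isOpen_setOf_bijective_mfderiv hπ).isClosed_compl.isCompact.image
    hπ.continuous).isClosed.isOpen_compl

end InverseFunction

section ChainRule

variable {E : Type*} [NormedAddCommGroup E] [NormedSpace ℝ E]
  {F : Type*} [NormedAddCommGroup F] [NormedSpace ℝ F]
  {G : Type*} [NormedAddCommGroup G] [NormedSpace ℝ G]
  {M : Type*} [TopologicalSpace M] [ChartedSpace E M]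

theorem hasFDerivAt_comp_of_mfderiv_eq_comp {π : M → F} {S : M → G} {σ : F → M} {q : F}
    {L : F →L[ℝ] G} (hσ : MDifferentiableAt 𝓘(ℝ, F) 𝓘(ℝ, E) σ q)
    (hπ : MDifferentiableAt 𝓘(ℝ, E) 𝓘(ℝ, F) π (σ q))
    (hS : MDifferentiableAt 𝓘(ℝ, E) 𝓘(ℝ, G) S (σ q)) (hπσ : π ∘ σ =ᶠ[𝓝 q] id)
    (hSπ : mfderiv 𝓘(ℝ, E) 𝓘(ℝ, G) S (σ q) = L.comp (mfderiv 𝓘(ℝ, E) 𝓘(ℝ, F) π (σ q))) :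
    HasFDerivAt (S ∘ σ) L q := by
  have h : mfderiv 𝓘(ℝ, F) 𝓘(ℝ, G) (S ∘ σ) q = L := by
    rw [mfderiv_comp q hS hσ, hSπ]
    change L.comp ((mfderiv 𝓘(ℝ, E) 𝓘(ℝ, F) π (σ q)).comp (mfderiv 𝓘(ℝ, F) 𝓘(ℝ, E) σ q)) = L
    rw [← mfderiv_comp q hπ hσ, hπσ.mfderiv_eq, mfderiv_id]
    rfl
  exact hasMFDerivAt_iff_hasFDerivAt.mp (h ▸ (hS.comp q hσ).hasMFDerivAt)

end ChainRule

section Collisions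

variable {X Y Z : Type*}

def fiberCollisions (π : X → Y) (S : X → Z) : Set (X × X) :=
  {p | π p.1 = π p.2 ∧ S p.1 = S p.2 ∧ p.1 ≠ p.2}

theorem injOn_preimage_singleton_iff_notMem_image_fiberCollisions {π : X → Y} {S : X → Z}
    {q : Y} : InjOn S (π ⁻¹' {q}) ↔ q ∉ (π ∘ Prod.fst) '' fiberCollisions π S := by
  simp only [InjOn, fiberCollisions, mem_preimage, mem_singleton_iff, mem_image, Prod.exists,
    comp_apply, not_exists, not_and]
  constructor
  · rintro h x y ⟨hxy, hS, hne⟩ rfl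
    exact hne (h rfl hxy.symm hS)
  · rintro h x rfl y hy hS
    by_contra hne
    exact h x y ⟨hy.symm, hS, hne⟩ rfl

variable [TopologicalSpace X] [TopologicalSpace Y] [TopologicalSpace Z]

theorem mem_fiberCollisions_of_mem_closure [T2Space Y] [T2Space Z] {π : X → Y} {S : X → Z}
    (hπ : Continuous π) (hS : Continuous S) {p : X × X} (hp : p ∈ closure (fiberCollisions π S))
    (hloc : ∃ V ∈ 𝓝 p.1, InjOn π V) : p ∈ fiberCollisions π S := by
  have hsub : fiberCollisions π S ⊆ {p | π p.1 = π p.2 ∧ S p.1 = S p.2} :=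
    fun _ h => ⟨h.1, h.2.1⟩
  obtain ⟨hπp, hSp⟩ := closure_minimal hsub
    ((isClosed_eq (hπ.comp continuous_fst) (hπ.comp continuous_snd)).inter
      (isClosed_eq (hS.comp continuous_fst) (hS.comp continuous_snd))) hp
  refine ⟨hπp, hSp, fun hdiag => ?_⟩
  obtain ⟨V, hV, hinj⟩ := hloc
  have hVV : V ×ˢ V ∈ 𝓝 p := prod_mem_nhds hV (hdiag ▸ hV)
  obtain ⟨a, ⟨ha₁, ha₂⟩, hπa, -, hne⟩ := mem_closure_iff_nhds.mp hp _ hVV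
  exact hne (hinj ha₁ ha₂ hπa)

theorem isOpen_setOf_injOn_preimage_singleton [CompactSpace X] [T2Space Y] [T2Space Z]
    {π : X → Y} {S : X → Z} (hπ : Continuous π) (hS : Continuous S) {U : Set Y} (hU : IsOpen U)
    (hloc : ∀ x, π x ∈ U → ∃ V ∈ 𝓝 x, InjOn π V) :
    IsOpen {q ∈ U | InjOn S (π ⁻¹' {q})} := by
  have h : {q ∈ U | InjOn S (π ⁻¹' {q})} =
      U ∩ ((π ∘ Prod.fst) '' closure (fiberCollisions π S))ᶜ := by
    ext q
    simp only [mem_sep_iff, mem_inter_iff, mem_compl_iff,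
      injOn_preimage_singleton_iff_notMem_image_fiberCollisions]
    refine and_congr_right fun hq => not_congr ⟨fun h => image_mono subset_closure h, ?_⟩
    rintro ⟨p, hp, rfl⟩
    exact ⟨p, mem_fiberCollisions_of_mem_closure hπ hS hp (hloc _ hq), rfl⟩
  rw [h]
  exact hU.inter (isClosed_closure.isCompact.image (hπ.comp continuous_fst)).isClosed.isOpen_compl

end Collisions

theorem IsCompact.measure_image_inter_null_of_locally_null {X Y : Type*} [TopologicalSpace X]
    [MeasurableSpace Y] {μ : Measure Y} {f : X → Y}
    {s A : Set X} (hA : IsCompact A) (h : ∀ p ∈ A, ∃ W ∈ 𝓝 p, μ (f '' (s ∩ W)) = 0) :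
    μ (f '' (s ∩ A)) = 0 := by
  choose! W hW hWμ using h
  obtain ⟨t, htA, hcover⟩ := hA.elim_nhds_subcover W hW
  refine measure_mono_null ?_ ((measure_biUnion_null_iff t.countable_toSet).mpr
    fun p hp => hWμ p (htA p hp))
  rintro _ ⟨x, ⟨hxs, hxA⟩, rfl⟩
  obtain ⟨p, hp, hxp⟩ := mem_iUnion₂.mp (hcover hxA)
  exact mem_iUnion₂.mpr ⟨p, hp, x, ⟨hxs, hxp⟩, rfl⟩

theorem ContinuousLinearMap.bijective_iff_det_ne_zero {E : Type*} [NormedAddCommGroup E]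
    [NormedSpace ℝ E] [FiniteDimensional ℝ E] (A : E →L[ℝ] E) :
    Bijective A ↔ A.det ≠ 0 :=
  (Module.End.isUnit_iff _).symm.trans <|
    (LinearMap.isUnit_iff_isUnit_det _).trans isUnit_iff_ne_zero

section Sard

variable {E : Type*} [NormedAddCommGroup E] [NormedSpace ℝ E] [FiniteDimensional ℝ E]
  [MeasurableSpace E] [BorelSpace E] (μ : Measure E) [μ.IsAddHaarMeasure]
  {M : Type*} [TopologicalSpace M] [ChartedSpace E M] [IsManifold 𝓘(ℝ, E) 1 M]

theorem addHaar_image_setOf_not_bijective_mfderiv_eq_zero [LindelofSpace M] {π : M → E}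
    (hπ : MDifferentiable 𝓘(ℝ, E) 𝓘(ℝ, E) π) :
    μ (π '' {x | ¬ Bijective (mfderiv 𝓘(ℝ, E) 𝓘(ℝ, E) π x)}) = 0 := by
  obtain ⟨t, htc, hcover⟩ := LindelofSpace.elim_nhds_subcover (fun x : M => (chartAt E x).source)
    fun x => chart_source_mem_nhds E x
  have hsub : π '' {x | ¬ Bijective (mfderiv 𝓘(ℝ, E) 𝓘(ℝ, E) π x)} ⊆ ⋃ x ∈ t,
      (π ∘ (chartAt E x).symm) '' {w ∈ (chartAt E x).target |
        ¬ Bijective (fderiv ℝ (π ∘ (chartAt E x).symm) w)} := by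
    rintro _ ⟨y, hy, rfl⟩
    obtain ⟨x, hx, hyx⟩ := mem_iUnion₂.mp (hcover ▸ mem_univ y)
    have hw := (chartAt E x).map_source hyx
    refine mem_iUnion₂.mpr ⟨x, hx, chartAt E x y, ⟨hw, ?_⟩, ?_⟩
    · rwa [bijective_fderiv_comp_chartAt_symm_iff x hw (hπ _), (chartAt E x).left_inv hyx]
    · simp [(chartAt E x).left_inv hyx]
  refine measure_mono_null hsub ((measure_biUnion_null_iff htc).mpr fun x _ => ?_)
  refine addHaar_image_eq_zero_of_det_fderivWithin_eq_zero μ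
    (f' := fderiv ℝ (π ∘ (chartAt E x).symm)) (fun w hw => ?_) fun w hw => ?_
  · exact (mdifferentiableAt_iff_differentiableAt.mp ((hπ _).comp w
      (mdifferentiableAt_atlas_symm (chart_mem_atlas E x) hw.1))).hasFDerivAt.hasFDerivWithinAt
  · simpa [ContinuousLinearMap.bijective_iff_det_ne_zero] using hw.2

end Sard

section ExactLagrangian

variable {E : Type*} [NormedAddCommGroup E] [InnerProductSpace ℝ E]
  {M : Type*} [TopologicalSpace M] [ChartedSpace E M] {π P : M → E} {S : M → ℝ}

theorem IsLocalDiffeomorphAt.hasFDerivAt_comp_localInverse {z : M}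
    (hf : IsLocalDiffeomorphAt 𝓘(ℝ, E) 𝓘(ℝ, E) 1 π z) (hπ : MDifferentiable 𝓘(ℝ, E) 𝓘(ℝ, E) π)
    (hS : MDifferentiable 𝓘(ℝ, E) 𝓘(ℝ, ℝ) S)
    (hexact : ∀ (x : M) (v : TangentSpace 𝓘(ℝ, E) x),
      mfderiv 𝓘(ℝ, E) 𝓘(ℝ, ℝ) S x v = ⟪P x, mfderiv 𝓘(ℝ, E) 𝓘(ℝ, E) π x v⟫)
    {q : E} (hq : q ∈ hf.localInverse.source) :
    HasFDerivAt (S ∘ hf.localInverse) (innerSL ℝ (P (hf.localInverse q))) q :=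
  hasFDerivAt_comp_of_mfderiv_eq_comp (hf.localInverse.mdifferentiableAt one_ne_zero hq)
    (hπ _) (hS _) (eventuallyEq_of_mem (hf.localInverse.open_source.mem_nhds hq)
      hf.localInverse_eqOn_right) (ContinuousLinearMap.ext (hexact _))

variable [FiniteDimensional ℝ E] [MeasurableSpace E] [BorelSpace E] (μ : Measure E)
  [μ.IsAddHaarMeasure] [IsManifold 𝓘(ℝ, E) 1 M]

theorem exists_mem_nhds_addHaar_image_fiberCollisions_inter_eq_zero
    (hπ : ContMDiff 𝓘(ℝ, E) 𝓘(ℝ, E) 1 π) (hS : ContMDiff 𝓘(ℝ, E) 𝓘(ℝ, ℝ) 1 S)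
    (hexact : ∀ (x : M) (v : TangentSpace 𝓘(ℝ, E) x),
      mfderiv 𝓘(ℝ, E) 𝓘(ℝ, ℝ) S x v = ⟪P x, mfderiv 𝓘(ℝ, E) 𝓘(ℝ, E) π x v⟫)
    (hinj : Injective fun x => (π x, P x)) {x₀ y₀ : M}
    (hx₀ : Bijective (mfderiv 𝓘(ℝ, E) 𝓘(ℝ, E) π x₀))
    (hy₀ : Bijective (mfderiv 𝓘(ℝ, E) 𝓘(ℝ, E) π y₀)) :
    ∃ W ∈ 𝓝 (x₀, y₀), μ ((π ∘ Prod.fst) '' (fiberCollisions π S ∩ W)) = 0 := by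
  have h₁ := isLocalDiffeomorphAt_of_bijective_mfderiv hπ hx₀
  have h₂ := isLocalDiffeomorphAt_of_bijective_mfderiv hπ hy₀
  set σ₁ := h₁.localInverse
  set σ₂ := h₂.localInverse
  have hU : ∀ {z} (h : IsLocalDiffeomorphAt 𝓘(ℝ, E) 𝓘(ℝ, E) 1 π z),
      π ⁻¹' h.localInverse.source ∩ h.localInverse.target ∈ 𝓝 z := fun h =>
    inter_mem (hπ.continuous.continuousAt.preimage_mem_nhds
      (h.localInverse.open_source.mem_nhds h.localInverse_mem_source))
      (h.localInverse.open_target.mem_nhds h.localInverse_mem_target)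
  have hg : ∀ {z} (h : IsLocalDiffeomorphAt 𝓘(ℝ, E) 𝓘(ℝ, E) 1 π z) {q},
      q ∈ h.localInverse.source → ContDiffAt ℝ 1 (S ∘ h.localInverse) q := fun h q hq =>
    contMDiffAt_iff_contDiffAt.mp ((hS _).comp q
      (h.localInverse.contMDiffOn.contMDiffAt (h.localInverse.open_source.mem_nhds hq)))
  refine ⟨_, prod_mem_nhds (hU h₁) (hU h₂), measure_mono_null ?_
    (addHaar_setOf_regular_zero_eq_zero μ fun q => S (σ₁ q) - S (σ₂ q))⟩
  rintro _ ⟨⟨a, b⟩, ⟨⟨hab, hS_ab, hne⟩, ⟨ha₁, ha₂⟩, hb₁, hb₂⟩, rfl⟩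
  simp only [mem_preimage, comp_apply] at hab hS_ab hne ha₁ hb₁ ⊢
  rw [hab] at ha₁ ⊢
  have hσa : σ₁ (π b) = a := hab ▸ h₁.localInverse_left_inv ha₂
  have hσb : σ₂ (π b) = b := h₂.localInverse_left_inv hb₂
  have hd : HasFDerivAt (fun q => S (σ₁ q) - S (σ₂ q))
      (innerSL ℝ (P (σ₁ (π b))) - innerSL ℝ (P (σ₂ (π b)))) (π b) :=
    (h₁.hasFDerivAt_comp_localInverse (hπ.mdifferentiable one_ne_zero)
      (hS.mdifferentiable one_ne_zero) hexact ha₁).sub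
    (h₂.hasFDerivAt_comp_localInverse (hπ.mdifferentiable one_ne_zero)
      (hS.mdifferentiable one_ne_zero) hexact hb₁)
  refine ⟨by simp [hσa, hσb, hS_ab], (hg h₁ ha₁).sub (hg h₂ hb₁), ?_⟩
  rw [hd.fderiv, hσa, hσb, sub_ne_zero]
  exact fun hP => hne (hinj (Prod.ext hab (ext_inner_right ℝ (DFunLike.congr_fun hP))))

theorem addHaar_setOf_forall_bijective_mfderiv_not_injOn_eq_zero [CompactSpace M]
    (hπ : ContMDiff 𝓘(ℝ, E) 𝓘(ℝ, E) 1 π) (hS : ContMDiff 𝓘(ℝ, E) 𝓘(ℝ, ℝ) 1 S)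
    (hexact : ∀ (x : M) (v : TangentSpace 𝓘(ℝ, E) x),
      mfderiv 𝓘(ℝ, E) 𝓘(ℝ, ℝ) S x v = ⟪P x, mfderiv 𝓘(ℝ, E) 𝓘(ℝ, E) π x v⟫)
    (hinj : Injective fun x => (π x, P x)) :
    μ {q | (∀ x, π x = q → Bijective (mfderiv 𝓘(ℝ, E) 𝓘(ℝ, E) π x)) ∧
      ¬ InjOn S (π ⁻¹' {q})} = 0 := by
  refine measure_null_of_locally_null _ fun q hq => ?_
  obtain ⟨K, hK, hqK, hKreg⟩ :=
    exists_compact_subset (isOpen_setOf_forall_bijective_mfderiv hπ) hq.1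
  have hA : IsCompact {p : M × M | π p.1 = π p.2 ∧ π p.1 ∈ K} :=
    ((isClosed_eq (hπ.continuous.comp continuous_fst) (hπ.continuous.comp continuous_snd)).inter
      (hK.isClosed.preimage (hπ.continuous.comp continuous_fst))).isCompact
  have hnull := hA.measure_image_inter_null_of_locally_null (μ := μ) (f := π ∘ Prod.fst)
    (s := fiberCollisions π S) fun p hp =>
      exists_mem_nhds_addHaar_image_fiberCollisions_inter_eq_zero μ hπ hS hexact hinj
        (hKreg hp.2 p.1 rfl) (hKreg hp.2 p.2 hp.1.symm)
  refine ⟨_, inter_mem_nhdsWithin _ (isOpen_interior.mem_nhds hqK), measure_mono_null ?_ hnull⟩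
  rintro q' ⟨⟨-, hq'⟩, hq'K⟩
  rw [injOn_preimage_singleton_iff_notMem_image_fiberCollisions, not_not] at hq'
  obtain ⟨p, hp, rfl⟩ := hq'
  exact ⟨p, ⟨hp, hp.1, interior_subset hq'K⟩, rfl⟩

theorem addHaar_compl_setOf_injOn_preimage_singleton_eq_zero [CompactSpace M]
    (hπ : ContMDiff 𝓘(ℝ, E) 𝓘(ℝ, E) 1 π) (hS : ContMDiff 𝓘(ℝ, E) 𝓘(ℝ, ℝ) 1 S)
    (hexact : ∀ (x : M) (v : TangentSpace 𝓘(ℝ, E) x),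
      mfderiv 𝓘(ℝ, E) 𝓘(ℝ, ℝ) S x v = ⟪P x, mfderiv 𝓘(ℝ, E) 𝓘(ℝ, E) π x v⟫)
    (hinj : Injective fun x => (π x, P x)) :
    μ {q ∈ {q | ∀ x, π x = q → Bijective (mfderiv 𝓘(ℝ, E) 𝓘(ℝ, E) π x)} |
      InjOn S (π ⁻¹' {q})}ᶜ = 0 := by
  refine measure_mono_null (fun q hq => ?_) (measure_union_null
    (addHaar_image_setOf_not_bijective_mfderiv_eq_zero μ (hπ.mdifferentiable one_ne_zero))
    (addHaar_setOf_forall_bijective_mfderiv_not_injOn_eq_zero μ hπ hS hexact hinj))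
  by_cases hreg : ∀ x, π x = q → Bijective (mfderiv 𝓘(ℝ, E) 𝓘(ℝ, E) π x)
  · exact Or.inr ⟨hreg, fun h => hq ⟨hreg, h⟩⟩
  · push Not at hreg
    obtain ⟨x, rfl, hx⟩ := hreg
    exact Or.inl ⟨x, hx, rfl⟩

end ExactLagrangian

theorem cerf_regular_values_open_dense_full_measure_general (n : ℕ)
    (N : Type*) [TopologicalSpace N] [ChartedSpace (EuclideanSpace ℝ (Fin n)) N]
    [IsManifold (𝓡 n) (⊤ : ℕ∞) N] [CompactSpace N]
    (ι : N → EuclideanSpace ℝ (Fin n) × EuclideanSpace ℝ (Fin n))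
    (hι : ContMDiff (𝓡 n) 𝓘(ℝ, EuclideanSpace ℝ (Fin n) × EuclideanSpace ℝ (Fin n)) (⊤ : ℕ∞) ι)
    (hinj : Function.Injective ι)
    (S : N → ℝ) (hS : ContMDiff (𝓡 n) 𝓘(ℝ, ℝ) (⊤ : ℕ∞) S)
    (π : N → EuclideanSpace ℝ (Fin n)) (hπ : ∀ x, π x = (ι x).1)
    (hexact : ∀ (x : N) (v : TangentSpace (𝓡 n) x),
      mfderiv (𝓡 n) 𝓘(ℝ, ℝ) S x v =
        ⟪(ι x).2, mfderiv (𝓡 n) 𝓘(ℝ, EuclideanSpace ℝ (Fin n)) π x v⟫)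
    (𝒰 : Set (EuclideanSpace ℝ (Fin n)))
    (h𝒰 : 𝒰 = {q | ∀ x, π x = q →
      Function.Bijective ⇑(mfderiv (𝓡 n) 𝓘(ℝ, EuclideanSpace ℝ (Fin n)) π x)})
    (𝒰Cf : Set (EuclideanSpace ℝ (Fin n)))
    (h𝒰Cf : 𝒰Cf = {q ∈ 𝒰 | Set.InjOn S (π ⁻¹' {q})}) :
    IsOpen 𝒰Cf ∧ Dense 𝒰Cf ∧ volume 𝒰Cfᶜ = 0 := by
  subst h𝒰 h𝒰Cf
  have hπ₁ : ContMDiff (𝓡 n) 𝓘(ℝ, EuclideanSpace ℝ (Fin n)) 1 π := by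
    rw [show π = Prod.fst ∘ ι from funext hπ]
    exact (contDiff_fst.comp_contMDiff hι).of_le (by exact_mod_cast le_top)
  have hS₁ : ContMDiff (𝓡 n) 𝓘(ℝ, ℝ) 1 S := hS.of_le (by exact_mod_cast le_top)
  have hinj' : Injective fun x => (π x, (ι x).2) := by simpa [hπ] using hinj
  have hopen := isOpen_setOf_injOn_preimage_singleton hπ₁.continuous hS₁.continuous
    (isOpen_setOf_forall_bijective_mfderiv hπ₁)
    fun x hx => exists_mem_nhds_injOn_of_bijective_mfderiv hπ₁ (hx x rfl)
  have hnull := addHaar_compl_setOf_injOn_preimage_singleton_eq_zero volume hπ₁ hS₁ hexact hinj'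
  refine ⟨hopen, ?_, hnull⟩
  simpa using interior_eq_empty_iff_dense_compl.mp (Measure.interior_eq_empty_of_null hnull)

/-- (Proposition 4.3.) For a compact exact Lagrangian immersion
`ι = (Q̃, P̃)` with Liouville primitive `S` (i.e. `dS = ι*θ`), the set `𝒰^Cf` of
Cerf-regular values (regular values `q` of `π = Q̃` over which `S` is injective on the
fiber) is open and dense with Lebesgue-null complement. -/
theorem cerf_regular_values_open_dense_full_measure (n : ℕ)
    (N : Type*) [TopologicalSpace N] [ChartedSpace (EuclideanSpace ℝ (Fin n)) N]
    [IsManifold (𝓡 n) (⊤ : ℕ∞) N] [CompactSpace N]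
    (ι : N → EuclideanSpace ℝ (Fin n) × EuclideanSpace ℝ (Fin n))
    (hι : ContMDiff (𝓡 n) 𝓘(ℝ, EuclideanSpace ℝ (Fin n) × EuclideanSpace ℝ (Fin n)) (⊤ : ℕ∞) ι)
    (hinj : Function.Injective ι)
    (himm : ∀ x, Function.Injective
      ⇑(mfderiv (𝓡 n) 𝓘(ℝ, EuclideanSpace ℝ (Fin n) × EuclideanSpace ℝ (Fin n)) ι x))
    (S : N → ℝ) (hS : ContMDiff (𝓡 n) 𝓘(ℝ, ℝ) (⊤ : ℕ∞) S)
    (π : N → EuclideanSpace ℝ (Fin n)) (hπ : ∀ x, π x = (ι x).1)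
    (hexact : ∀ (x : N) (v : TangentSpace (𝓡 n) x),
      mfderiv (𝓡 n) 𝓘(ℝ, ℝ) S x v =
        ⟪(ι x).2, mfderiv (𝓡 n) 𝓘(ℝ, EuclideanSpace ℝ (Fin n)) π x v⟫)
    (𝒰 : Set (EuclideanSpace ℝ (Fin n)))
    (h𝒰 : 𝒰 = {q | ∀ x, π x = q →
      Function.Bijective ⇑(mfderiv (𝓡 n) 𝓘(ℝ, EuclideanSpace ℝ (Fin n)) π x)})
    (𝒰Cf : Set (EuclideanSpace ℝ (Fin n)))
    (h𝒰Cf : 𝒰Cf = {q ∈ 𝒰 | Set.InjOn S (π ⁻¹' {q})}) :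
    IsOpen 𝒰Cf ∧ Dense 𝒰Cf ∧ volume 𝒰Cfᶜ = 0 :=
  cerf_regular_values_open_dense_full_measure_general n N ι hι hinj S hS π hπ hexact 𝒰 h𝒰 𝒰Cf h𝒰Cf
end

section
/- Let K > 0 and let f_k : ℝⁿ → ℝ be a sequence of K-Lipschitz functions converging uniformly to a function f : ℝⁿ → ℝ. Let V ⊆ ℝⁿ be a set whose complement has Lebesgue measure zero, such that every f_k is differentiable at every point of V. For q ∈ ℝⁿ define Λ_q ⊆ ℝⁿ to be the set of all p ∈ ℝⁿ for which there exist a strictly increasing sequence of indices (k_j) and points x_j ∈ V with x_j → q and ∇f_{k_j}(x_j) → p. If f is differentiable at the point q, then ∇f(q) belongs to the convex hull of Λ_q. -/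
open scoped NNReal Topology
open MeasureTheory Filter Set Metric

/-!
Let `C` be the set of cluster points of `(k, x) ↦ ∇f_k(x)` as `k → ∞` and `x → q` inside `V`.
It is a compact subset of `Λ_q`, since all gradients lie in the closed ball of radius `K`, so its
convex hull is compact. If `∇f(q)` were outside that hull, a separating vector `v` and level `u`
would give `⟪∇f_k(x), v⟫ < u` for all large `k` and all `x ∈ V` near `q`. Almost every line
parallel to `v` meets `V` in a set of full length, and `f_k` is absolutely continuous along it,
so integrating the derivative gives `f_k(y + t v) - f_k(y) ≤ u t` for almost every `y` near `q`,
hence for `y = q` by continuity. Letting `k → ∞` and then `t → 0⁺` yields `⟪∇f(q), v⟫ ≤ u`, a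
contradiction.
-/

theorem isCompact_convexHull {E : Type*} [NormedAddCommGroup E] [NormedSpace ℝ E]
    [FiniteDimensional ℝ E] {s : Set E} (hs : IsCompact s) : IsCompact (convexHull ℝ s) := by
  rcases s.eq_empty_or_nonempty with rfl | ⟨p₀, hp₀⟩
  · simp
  -- by Carathéodory, `finrank + 1` points suffice
  set m := Module.finrank ℝ E + 1
  let Φ : (Fin m → ℝ) × (Fin m → E) → E := fun wz => ∑ i, wz.1 i • wz.2 i
  suffices Φ '' (stdSimplex ℝ (Fin m) ×ˢ univ.pi fun _ => s) = convexHull ℝ s by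
    rw [← this]
    refine ((isCompact_stdSimplex ℝ (Fin m)).prod (isCompact_univ_pi fun _ => hs)).image ?_
    fun_prop
  refine (image_subset_iff.2 ?_).antisymm fun x hx => ?_
  · rintro ⟨w, z⟩ ⟨⟨hw₀, hw₁⟩, hz⟩
    exact (convex_convexHull ℝ s).sum_mem (fun i _ => hw₀ i) hw₁
      fun i _ => subset_convexHull ℝ s (hz i (mem_univ i))
  obtain ⟨ι, _, z, w, hzs, hz, hw₀, hw₁, rfl⟩ := eq_pos_convex_span_of_mem_convexHull hx
  have hcard : Fintype.card ι ≤ m :=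
    hz.card_le_finrank_succ.trans (Nat.succ_le_succ (Submodule.finrank_le _))
  let e : ι ↪ Fin m := (Fintype.equivFin ι).toEmbedding.trans (Fin.castLEEmb hcard)
  have extend_mem (i : Fin m) : Function.extend e z (fun _ => p₀) i ∈ s := by
    by_cases hi : ∃ a, e a = i
    · obtain ⟨a, rfl⟩ := hi
      rw [e.injective.extend_apply]
      exact hzs (mem_range_self a)
    · rw [Function.extend_apply' _ _ _ hi]
      exact hp₀
  refine ⟨(Function.extend e w 0, Function.extend e z fun _ => p₀),
    ⟨⟨Function.extend_nonneg (f := e) (g := w) (e := 0) (fun a => (hw₀ a).le) le_rfl, ?_⟩,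
      fun i _ => extend_mem i⟩, ?_⟩
  · rw [← hw₁]
    refine (Fintype.sum_of_injective e e.injective _ _ (fun i hi => ?_) fun a => ?_).symm
    · exact Function.extend_apply' _ _ _ hi
    · exact (e.injective.extend_apply _ _ a).symm
  · refine (Fintype.sum_of_injective e e.injective _ _ (fun i hi => ?_) fun a => ?_).symm
    · simp only [Function.extend_apply' _ _ _ hi, Pi.zero_apply, zero_smul]
    · simp only [e.injective.extend_apply]

theorem isCompact_setOf_mapClusterPt {α X : Type*} [TopologicalSpace X] [T2Space X]
    {s : Set X} (hs : IsCompact s) {l : Filter α} {F : α → X} (hF : ∀ᶠ a in l, F a ∈ s) :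
    IsCompact {p | MapClusterPt p l F} :=
  hs.of_isClosed_subset isClosed_setOfPred_clusterPt fun _ hp =>
    hs.isClosed.mem_of_mapClusterPt hp hF

theorem MapClusterPt.exists_strictMono_seq {X Y : Type*} [TopologicalSpace X]
    [FirstCountableTopology X] [TopologicalSpace Y] [FirstCountableTopology Y] {G : ℕ → X → Y}
    {V : Set X} {q : X} {p : Y}
    (h : MapClusterPt p (atTop ×ˢ 𝓝[V] q) fun kx => G kx.1 kx.2) :
    ∃ k : ℕ → ℕ, StrictMono k ∧ ∃ x : ℕ → X, (∀ j, x j ∈ V) ∧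
      Tendsto x atTop (𝓝 q) ∧ Tendsto (fun j => G (k j) (x j)) atTop (𝓝 p) := by
  obtain ⟨ψ, hψp, hψ⟩ := h.exists_seq_tendsto
  obtain ⟨hk, hx⟩ := tendsto_prod_iff'.1 hψ
  obtain ⟨hxq, hxV⟩ := tendsto_nhdsWithin_iff.1 hx
  obtain ⟨N, hN⟩ := eventually_atTop.1 hxV
  obtain ⟨φ, hφ, hkφ⟩ := strictMono_subseq_of_tendsto_atTop (hk.comp (tendsto_add_atTop_nat N))
  have hφN : Tendsto (fun j => φ j + N) atTop atTop :=
    (tendsto_add_atTop_nat N).comp hφ.tendsto_atTop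
  exact ⟨_, hkφ, fun j => (ψ (φ j + N)).2, fun j => hN _ (Nat.le_add_left N _),
    hxq.comp hφN, hψp.comp hφN⟩

theorem AbsolutelyContinuousOnInterval.sub_le_mul_of_ae_deriv_le {g : ℝ → ℝ} {a b u : ℝ}
    (hg : AbsolutelyContinuousOnInterval g a b) (hab : a ≤ b)
    (hderiv : ∀ᵐ s, s ∈ Icc a b → deriv g s ≤ u) : g b - g a ≤ u * (b - a) := by
  rw [← hg.integral_deriv_eq_sub]
  calc ∫ s in a..b, deriv g s ≤ ∫ _ in a..b, u :=
        intervalIntegral.integral_mono_ae_restrict hab hg.intervalIntegrable_deriv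
          intervalIntegrable_const ((ae_restrict_iff' measurableSet_Icc).2 hderiv)
    _ = u * (b - a) := by simp [mul_comm]

theorem HasDerivWithinAt.le_of_eventually_sub_le_mul {h : ℝ → ℝ} {a d u : ℝ}
    (hd : HasDerivWithinAt h d (Ioi a) a)
    (hle : ∀ᶠ t in 𝓝[>] a, h t - h a ≤ u * (t - a)) : d ≤ u := by
  refine le_of_tendsto ((hasDerivWithinAt_iff_tendsto_slope' self_notMem_Ioi).1 hd) ?_
  filter_upwards [hle, self_mem_nhdsWithin] with t ht hat
  rw [slope_def_field]
  exact (div_le_iff₀ (sub_pos.2 hat)).2 ht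

section Lines

variable {E F : Type*} [NormedAddCommGroup E] [NormedSpace ℝ E]
  [NormedAddCommGroup F] [NormedSpace ℝ F]

theorem DifferentiableAt.hasDerivAt_comp_add_smul {g : E → F} {y v : E} {s : ℝ}
    (hg : DifferentiableAt ℝ g (y + s • v)) :
    HasDerivAt (fun t : ℝ => g (y + t • v)) (fderiv ℝ g (y + s • v) v) s := by
  have hline : HasDerivAt (fun t : ℝ => y + t • v) v s := by
    simpa using ((hasDerivAt_id s).smul_const v).const_add y
  exact hg.hasFDerivAt.comp_hasDerivAt s hline

theorem LipschitzOnWith.sub_le_mul_of_ae_add_smul_mem {K : ℝ≥0} {g : E → ℝ} {U V : Set E}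
    (hg : LipschitzOnWith K g U) {y v : E} {u t : ℝ} (ht : 0 ≤ t)
    (hseg : ∀ s ∈ Icc 0 t, y + s • v ∈ U) (hyV : ∀ᵐ s : ℝ, y + s • v ∈ V)
    (hdiff : ∀ x ∈ V ∩ U, DifferentiableAt ℝ g x) (hle : ∀ x ∈ V ∩ U, fderiv ℝ g x v ≤ u) :
    g (y + t • v) - g y ≤ u * t := by
  have hlip := hg.comp ((LipschitzWith.const y).add
    (ContinuousLinearMap.toSpanSingleton ℝ v).lipschitz).lipschitzOnWith hseg
  rw [← uIcc_of_le ht] at hlip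
  have hac : AbsolutelyContinuousOnInterval (fun s : ℝ => g (y + s • v)) 0 t :=
    hlip.absolutelyContinuousOnInterval
  have hderiv : ∀ᵐ s, s ∈ Icc 0 t → deriv (fun s : ℝ => g (y + s • v)) s ≤ u := by
    filter_upwards [hyV] with s hsV hs
    have hx : y + s • v ∈ V ∩ U := ⟨hsV, hseg s hs⟩
    rw [(hdiff _ hx).hasDerivAt_comp_add_smul.deriv]
    exact hle _ hx
  simpa using hac.sub_le_mul_of_ae_deriv_le ht hderiv

end Lines

theorem ContinuousOn.le_of_ae_le {X : Type*} [TopologicalSpace X] [MeasurableSpace X]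
    {μ : Measure X} [μ.IsOpenPosMeasure] {U : Set X} (hU : IsOpen U) {G : X → ℝ}
    (hG : ContinuousOn G U) {c : ℝ} (h : ∀ᵐ y ∂μ, y ∈ U → G y ≤ c) {x : X} (hx : x ∈ U) :
    G x ≤ c := by
  by_contra hlt
  have hopen : IsOpen (U ∩ G ⁻¹' Ioi c) := hG.isOpen_inter_preimage hU isOpen_Ioi
  refine (hopen.measure_pos μ ⟨x, hx, not_le.1 hlt⟩).ne' (measure_mono_null ?_ (ae_iff.1 h))
  rintro y ⟨hyU, hy⟩ hle
  exact not_le.2 hy (hle hyU)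

section HaarMeasure

variable {E : Type*} [NormedAddCommGroup E] [NormedSpace ℝ E] [FiniteDimensional ℝ E]
  [MeasurableSpace E] [BorelSpace E] {μ : Measure E} [μ.IsAddHaarMeasure]

theorem ae_ae_add_smul_mem {V : Set E} (hV : μ Vᶜ = 0) (v : E) :
    ∀ᵐ y ∂μ, ∀ᵐ s : ℝ, y + s • v ∈ V := by
  have hW : ∀ᵐ y ∂μ, y ∈ (toMeasurable μ Vᶜ)ᶜ :=
    compl_mem_ae_iff.2 ((measure_toMeasurable Vᶜ).trans hV)
  filter_upwards [(ae_ae_add_linearMap_mem_iff (LinearMap.toSpanSingleton ℝ E v) volume μ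
    (measurableSet_toMeasurable μ Vᶜ).compl).2 hW] with y hy
  filter_upwards [hy] with s hs
  exact compl_subset_comm.1 (subset_toMeasurable μ Vᶜ) hs

theorem LipschitzOnWith.sub_le_mul_of_fderiv_apply_le {K : ℝ≥0} {g : E → ℝ} {q v : E}
    {r u t : ℝ} (hg : LipschitzOnWith K g (ball q r)) {V : Set E} (hV : μ Vᶜ = 0)
    (hdiff : ∀ x ∈ V ∩ ball q r, DifferentiableAt ℝ g x)
    (hle : ∀ x ∈ V ∩ ball q r, fderiv ℝ g x v ≤ u) (ht : 0 ≤ t) (htr : t * ‖v‖ < r) :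
    g (q + t • v) - g q ≤ u * t := by
  set ρ := r - t * ‖v‖
  have hρ : 0 < ρ := sub_pos.2 htr
  have hseg : ∀ y ∈ ball q ρ, ∀ s ∈ Icc 0 t, y + s • v ∈ ball q r := by
    intro y hy s hs
    calc dist (y + s • v) q ≤ dist (y + s • v) y + dist y q := dist_triangle _ _ _
      _ = s * ‖v‖ + dist y q := by rw [dist_self_add_left, norm_smul, Real.norm_of_nonneg hs.1]
      _ < t * ‖v‖ + ρ := add_lt_add_of_le_of_lt
          (mul_le_mul_of_nonneg_right hs.2 (norm_nonneg v)) hy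
      _ = r := by ring
  have hline : ∀ᵐ y ∂μ, y ∈ ball q ρ → g (y + t • v) - g y ≤ u * t := by
    filter_upwards [ae_ae_add_smul_mem hV v] with y hyV hy
    exact hg.sub_le_mul_of_ae_add_smul_mem ht (hseg y hy) hyV hdiff hle
  have hcont : ContinuousOn (fun y => g (y + t • v) - g y) (ball q ρ) :=
    (hg.continuousOn.comp (continuousOn_id.add continuousOn_const)
      fun y hy => hseg y hy t ⟨ht, le_rfl⟩).sub
      (hg.continuousOn.mono (ball_subset_ball (by nlinarith [norm_nonneg v])))
  exact hcont.le_of_ae_le isOpen_ball hline (mem_ball_self hρ)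

theorem fderiv_apply_le_of_tendsto {K : ℝ≥0} {fk : ℕ → E → ℝ} {f : E → ℝ} {V : Set E}
    {q v : E} {r u : ℝ} (hlim : ∀ x, Tendsto (fun k => fk k x) atTop (𝓝 (f x)))
    (hLip : ∀ k, LipschitzOnWith K (fk k) (ball q r)) (hr : 0 < r) (hV : μ Vᶜ = 0)
    (hdiff : ∀ k, ∀ x ∈ V ∩ ball q r, DifferentiableAt ℝ (fk k) x)
    (hle : ∀ᶠ k in atTop, ∀ x ∈ V ∩ ball q r, fderiv ℝ (fk k) x v ≤ u)
    (hq : DifferentiableAt ℝ f q) : fderiv ℝ f q v ≤ u := by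
  have hsub : ∀ t, 0 ≤ t → t * ‖v‖ < r → f (q + t • v) - f q ≤ u * t := fun t ht htr =>
    le_of_tendsto ((hlim _).sub (hlim _)) <| hle.mono fun k hk =>
      (hLip k).sub_le_mul_of_fderiv_apply_le hV (hdiff k) hk ht htr
  have hderiv : HasDerivAt (fun t : ℝ => f (q + t • v)) (fderiv ℝ f q v) 0 := by
    simpa using (show DifferentiableAt ℝ f (q + (0 : ℝ) • v) by simpa using hq)
      |>.hasDerivAt_comp_add_smul
  have hsmall : ∀ᶠ t : ℝ in 𝓝 0, t * ‖v‖ < r :=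
    (continuous_mul_const ‖v‖).continuousAt.eventually_lt continuousAt_const (by simpa using hr)
  refine hderiv.hasDerivWithinAt.le_of_eventually_sub_le_mul ?_
  filter_upwards [self_mem_nhdsWithin, nhdsWithin_le_nhds hsmall] with t ht htr
  simpa using hsub t ht.le htr

end HaarMeasure

theorem gradient_mem_convexHull_of_limits_general (n : ℕ) (K : ℝ≥0)
    (fk : ℕ → EuclideanSpace ℝ (Fin n) → ℝ) (f : EuclideanSpace ℝ (Fin n) → ℝ)
    (hLip : ∀ k, LipschitzWith K (fk k))
    (hconv : TendstoUniformly fk f atTop)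
    (V : Set (EuclideanSpace ℝ (Fin n))) (hV : volume Vᶜ = 0)
    (hdiff : ∀ k, ∀ x ∈ V, DifferentiableAt ℝ (fk k) x)
    (q : EuclideanSpace ℝ (Fin n)) (hq : DifferentiableAt ℝ f q) :
    gradient f q ∈ convexHull ℝ
      {p : EuclideanSpace ℝ (Fin n) | ∃ k : ℕ → ℕ, StrictMono k ∧
        ∃ x : ℕ → EuclideanSpace ℝ (Fin n), (∀ j, x j ∈ V) ∧
          Tendsto x atTop (nhds q) ∧
          Tendsto (fun j => gradient (fk (k j)) (x j)) atTop (nhds p)} := by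
  set C := {p | MapClusterPt p (atTop ×ˢ 𝓝[V] q) fun kx => gradient (fk kx.1) kx.2}
  refine convexHull_mono (fun p hp =>
    MapClusterPt.exists_strictMono_seq (G := fun k => gradient (fk k)) hp) ?_
  have hbound : ∀ᶠ kx in atTop ×ˢ 𝓝[V] q, gradient (fk kx.1) kx.2 ∈ closedBall 0 K :=
    .of_forall fun kx => by
      simpa [gradient] using norm_fderiv_le_of_lipschitz ℝ (hLip kx.1) (x₀ := kx.2)
  have hC : IsCompact C := isCompact_setOf_mapClusterPt (isCompact_closedBall 0 K) hbound
  by_contra hnot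
  obtain ⟨φ, u, hφC, hφq⟩ := geometric_hahn_banach_closed_point (convex_convexHull ℝ C)
    (isCompact_convexHull hC).isClosed hnot
  set v := (InnerProductSpace.toDual ℝ _).symm φ
  have hφ (g : EuclideanSpace ℝ (Fin n) → ℝ) (x) : φ (gradient g x) = fderiv ℝ g x v := by
    rw [← inner_gradient_left, real_inner_comm, InnerProductSpace.toDual_symm_apply]
  have hA : ∀ᶠ kx in atTop ×ˢ 𝓝[V] q, φ (gradient (fk kx.1) kx.2) < u :=
    ((isCompact_closedBall 0 K).tendsto_nhdsSet_of_mapClusterPt hbound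
      fun p _ hp => hφC p (subset_convexHull ℝ C hp)).eventually_mem
      (isOpen_lt φ.continuous continuous_const).mem_nhdsSet_self
  obtain ⟨⟨N, r⟩, ⟨-, hr⟩, hNr⟩ := (atTop_basis.prod nhdsWithin_basis_ball).eventually_iff.1 hA
  refine (hφq.trans_eq (hφ f q)).not_ge (fderiv_apply_le_of_tendsto
    (fun x => hconv.tendsto_at x) (fun k => (hLip k).lipschitzOnWith) hr hV
    (fun k x hx => hdiff k x hx.1) (eventually_atTop.2 ⟨N, fun k hk x hx => ?_⟩) hq)
  rw [← hφ]
  exact (@hNr (k, x) ⟨hk, hx.2, hx.1⟩).le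

/-- (Lemma 5.3, Bernard–Oliveira dos Santos.) If equi-Lipschitz functions
`f_k` converge uniformly to `f`, all `f_k` are differentiable on a full-measure set `V`, and
`f` is differentiable at `q`, then `∇f(q)` lies in the convex hull of the set `Λ_q` of all
limits of gradients `∇f_{k_j}(x_j)` with `x_j ∈ V`, `x_j → q`. -/
theorem gradient_mem_convexHull_of_limits (n : ℕ) (K : ℝ≥0) (hK : 0 < K)
    (fk : ℕ → EuclideanSpace ℝ (Fin n) → ℝ) (f : EuclideanSpace ℝ (Fin n) → ℝ)
    (hLip : ∀ k, LipschitzWith K (fk k))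
    (hconv : TendstoUniformly fk f atTop)
    (V : Set (EuclideanSpace ℝ (Fin n))) (hV : volume Vᶜ = 0)
    (hdiff : ∀ k, ∀ x ∈ V, DifferentiableAt ℝ (fk k) x)
    (q : EuclideanSpace ℝ (Fin n)) (hq : DifferentiableAt ℝ f q) :
    gradient f q ∈ convexHull ℝ
      {p : EuclideanSpace ℝ (Fin n) | ∃ k : ℕ → ℕ, StrictMono k ∧
        ∃ x : ℕ → EuclideanSpace ℝ (Fin n), (∀ j, x j ∈ V) ∧
          Tendsto x atTop (nhds q) ∧
          Tendsto (fun j => gradient (fk (k j)) (x j)) atTop (nhds p)} :=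
  gradient_mem_convexHull_of_limits_general n K fk f hLip hconv V hV hdiff q hq
end
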